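/- arXiv:math/0202253 — 2 statements merged into one kernel-verified Lean document; each statement's English description precedes it below -/
import Mathlib

section
/- The residue at z = 0 of the meromorphic function exp(kz)/(1 - exp(-z))^R · dz equals the binomial coefficient binom(k+R-1, R-1), for every nonnegative integer k and positive integer R. Equivalently, the coefficient of z^{R-1} in the power series expansion of exp(kz)·(z/(1-exp(-z)))^R equals binom(k+R-1, R-1). -/
open PowerSeries

/-- The power series `(1 - exp(-z))/z = ∑_{m≥0} (-1)^m z^m/(m+1)!`; its inverse
is the analytic function `z/(1 - exp(-z))` (value `1` at `z = 0`). -/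
noncomputable def oneSubExpNegDivZ : PowerSeries ℚ :=
  PowerSeries.mk fun m => (-1 : ℚ) ^ m / (m + 1).factorial

/-- The power series of `exp (k z)`. -/
noncomputable def expSeries (k : ℕ) : PowerSeries ℚ :=
  PowerSeries.mk fun m => (k : ℚ) ^ m / m.factorial

namespace Stmt7Aux

local notation "H" => oneSubExpNegDivZ
local notation "G" => oneSubExpNegDivZ⁻¹

lemma constantCoeff_H : constantCoeff H = 1 := by
  simp [oneSubExpNegDivZ, ← coeff_zero_eq_constantCoeff]

lemma HG : H * G = 1 :=
  PowerSeries.mul_inv_cancel _ (by rw [constantCoeff_H]; norm_num)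

lemma constantCoeff_G : constantCoeff G = 1 := by
  rw [PowerSeries.constantCoeff_inv, constantCoeff_H]; norm_num

lemma constantCoeff_E (k : ℕ) : constantCoeff (expSeries k) = 1 := by
  simp [expSeries, ← coeff_zero_eq_constantCoeff]

lemma X_mul_DH : X * d⁄dX ℚ H = 1 - H - X * H := by
  ext n
  cases n with
  | zero =>
    simp [coeff_zero_eq_constantCoeff, constantCoeff_H]
  | succ m =>
    rw [coeff_succ_X_mul, coeff_derivative]
    simp only [map_sub, coeff_succ_X_mul, oneSubExpNegDivZ, coeff_mk, coeff_one,
      Nat.succ_ne_zero, if_false]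
    rw [Nat.factorial_succ, Nat.factorial_succ]
    push_cast
    field_simp
    ring

lemma DE (k : ℕ) : d⁄dX ℚ (expSeries k) = (k : ℚ) • expSeries k := by
  ext n
  rw [coeff_derivative]
  simp only [expSeries, coeff_mk, map_smul, smul_eq_mul]
  rw [Nat.factorial_succ]
  push_cast
  have : (n.factorial : ℚ) ≠ 0 := by exact_mod_cast n.factorial_ne_zero
  field_simp
  ring

lemma DG : d⁄dX ℚ G = -(G * G * d⁄dX ℚ H) := by
  have h := congrArg (d⁄dX ℚ) HG
  rw [Derivation.leibniz, Derivation.map_one_eq_zero] at h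
  have h2 := congrArg (G * ·) h
  simp only [smul_eq_mul, mul_add, mul_zero] at h2
  calc d⁄dX ℚ G = (H * G) * d⁄dX ℚ G := by rw [HG, one_mul]
    _ = G * (H * d⁄dX ℚ G) + G * (G * d⁄dX ℚ H) - G * G * d⁄dX ℚ H := by ring
    _ = -(G * G * d⁄dX ℚ H) := by rw [h2]; ring

/-- Main power series identity -/
lemma key_ps (k S : ℕ) :
    X * d⁄dX ℚ (expSeries k * G ^ (S + 1)) =
      (k : ℚ) • (X * (expSeries k * G ^ (S + 1)))
        - ((S + 1 : ℕ) : ℚ) • (expSeries k * G ^ (S + 2)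
            - expSeries k * G ^ (S + 1) - X * (expSeries k * G ^ (S + 1))) := by
  have hpow : d⁄dX ℚ (G ^ (S + 1)) = ((S + 1 : ℕ) : ℚ) • (G ^ S * d⁄dX ℚ G) := by
    rw [Derivation.leibniz_pow, Nat.add_sub_cancel, ← Nat.cast_smul_eq_nsmul ℚ]
    simp only [smul_eq_mul]
  have hGH : G ^ (S + 2) * H = G ^ (S + 1) := by
    calc G ^ (S + 2) * H = G ^ (S + 1) * (H * G) := by ring
      _ = G ^ (S + 1) := by rw [HG, mul_one]
  have hD : d⁄dX ℚ (expSeries k * G ^ (S + 1)) =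
      expSeries k * d⁄dX ℚ (G ^ (S + 1)) + G ^ (S + 1) * d⁄dX ℚ (expSeries k) := by
    rw [Derivation.leibniz]; simp only [smul_eq_mul]
  rw [hD, hpow, DG, DE]
  simp only [PowerSeries.smul_eq_C_mul]
  have expand : X * ((expSeries k) * ((C ((S+1:ℕ):ℚ)) * (G ^ S * -(G * G * d⁄dX ℚ H))) +
      G ^ (S+1) * ((C (k:ℚ)) * expSeries k)) =
      (C (k:ℚ)) * (X * (expSeries k * G ^ (S+1)))
      - (C ((S+1:ℕ):ℚ)) * (expSeries k * G ^ (S+2) * (X * d⁄dX ℚ H)) := by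
    ring
  rw [expand, X_mul_DH]
  have : expSeries k * G ^ (S+2) * (1 - H - X * H)
      = expSeries k * G ^ (S+2) - expSeries k * (G ^ (S+2) * H)
        - X * (expSeries k * (G ^ (S+2) * H)) := by ring
  rw [this, hGH]

end Stmt7Aux

namespace Stmt7Aux

local notation "H" => oneSubExpNegDivZ
local notation "G" => oneSubExpNegDivZ⁻¹

lemma key_coeff (k s : ℕ) :
    ((s : ℚ) + 1) * coeff (s + 1) (expSeries k * G ^ (s + 2)) =
      ((k : ℚ) + s + 1) * coeff s (expSeries k * G ^ (s + 1)) := by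
  have h := congrArg (coeff (s + 1)) (key_ps k s)
  simp only [map_sub, map_smul, coeff_succ_X_mul, coeff_derivative, smul_eq_mul] at h
  push_cast at h
  linear_combination h

lemma main (k : ℕ) : ∀ s : ℕ,
    coeff s (expSeries k * G ^ (s + 1)) = ((k + s).choose s : ℚ) := by
  intro s
  induction s with
  | zero =>
    simp only [zero_add, pow_one, Nat.choose_zero_right, Nat.cast_one,
      coeff_zero_eq_constantCoeff, map_mul, constantCoeff_E, constantCoeff_G, mul_one]
  | succ s ih =>
    have h := key_coeff k s
    rw [ih] at h
    have hchoose : ((k + s + 1) : ℚ) * ((k + s).choose s : ℚ)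
        = ((k + s + 1).choose (s + 1) : ℚ) * ((s : ℚ) + 1) := by
      have := Nat.add_one_mul_choose_eq (k + s) s
      exact_mod_cast congrArg (Nat.cast : ℕ → ℚ) this
    have hne : ((s : ℚ) + 1) ≠ 0 := by positivity
    have : ((s : ℚ) + 1) * coeff (s + 1) (expSeries k * G ^ (s + 2))
        = ((s : ℚ) + 1) * ((k + s + 1).choose (s + 1) : ℚ) := by
      rw [h]; push_cast at hchoose ⊢; linarith [hchoose]
    have := mul_left_cancel₀ hne this
    rw [this]
    ring_nf

end Stmt7Aux

theorem stmt7 (k R : ℕ) (hR : 0 < R) :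
    PowerSeries.coeff (R - 1) (expSeries k * oneSubExpNegDivZ⁻¹ ^ R) =
      (k + R - 1).choose (R - 1) := by
  obtain ⟨s, rfl⟩ : ∃ s, R = s + 1 := ⟨R - 1, (Nat.succ_pred_eq_of_pos hR).symm⟩
  have h1 : s + 1 - 1 = s := rfl
  have h2 : k + (s + 1) - 1 = k + s := by omega
  rw [h1, h2, Stmt7Aux.main k s]
end

section
/- Let Φ = [β_1,...,β_N] span ℝ^n with all β_i in an open half-space, and let c be a big chamber contained in the cone C(Φ), i.e., a connected component of the complement of the union of the cones spanned by subsets of Φ of cardinality < n. If a, b ∈ closure(c), then the partition polytope satisfies Π_Φ(a) + Π_Φ(b) = Π_Φ(a+b) (Minkowski sum), where Π_Φ(a) = {x ∈ ℝ^N_{≥0} : ∑ x_i β_i = a}. -/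
open Pointwise

/-- The cone generated by the subset `ν` of the list `Φ` of vectors. -/
def coneOn {N n : ℕ} (Φ : Fin N → Fin n → ℝ) (ν : Finset (Fin N)) :
    Set (Fin n → ℝ) :=
  {μ | ∃ t : Fin N → ℝ, (∀ i, 0 ≤ t i) ∧ (∀ i ∉ ν, t i = 0) ∧ μ = ∑ i, t i • Φ i}

/-- The set of regular vectors: the complement of the union of the cones generated
by subsets of `Φ` of cardinality `< n`. -/
def creg {N n : ℕ} (Φ : Fin N → Fin n → ℝ) : Set (Fin n → ℝ) :=
  (⋃ ν ∈ {ν : Finset (Fin N) | ν.card < n}, coneOn Φ ν)ᶜ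

/-- The partition polytope `Π_Φ(a)`. -/
def partitionPolytope {N n : ℕ} (Φ : Fin N → Fin n → ℝ) (a : Fin n → ℝ) :
    Set (Fin N → ℝ) :=
  {x | (∀ i, 0 ≤ x i) ∧ ∑ i, x i • Φ i = a}

open scoped Matrix


lemma cara {N n : ℕ} (Φ : Fin N → Fin n → ℝ) :
    ∀ (ν : Finset (Fin N)) (t : Fin N → ℝ), (∀ i, 0 ≤ t i) → (∀ i ∉ ν, t i = 0) →
    ∃ s : Finset (Fin N), s ⊆ ν ∧ LinearIndependent ℝ (fun i : s => Φ i) ∧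
      ∃ t' : Fin N → ℝ, (∀ i, 0 ≤ t' i) ∧ (∀ i ∉ s, t' i = 0) ∧ (∀ i ∈ s, 0 < t' i) ∧
        ∑ i, t' i • Φ i = ∑ i, t i • Φ i := by
  classical
  intro ν
  induction ν using Finset.strongInduction with
  | _ ν ih =>
    intro t ht0 hts
    set σ : Finset (Fin N) := Finset.univ.filter (fun i => t i ≠ 0) with hσdef
    have htσ : ∀ i ∉ σ, t i = 0 := by
      intro i hi
      simpa [hσdef] using hi
    have hσν : σ ⊆ ν := by
      intro i hi
      simp only [hσdef, Finset.mem_filter] at hi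
      by_contra h
      exact hi.2 (hts i h)
    by_cases hind : LinearIndependent ℝ (fun i : σ => Φ i)
    · refine ⟨σ, hσν, hind, t, ht0, htσ, ?_, rfl⟩
      intro i hi
      simp only [hσdef, Finset.mem_filter] at hi
      exact lt_of_le_of_ne (ht0 i) (Ne.symm hi.2)
    · obtain ⟨g, hgsum, j₀, hgj₀⟩ := Fintype.not_linearIndependent_iff.mp hind
      set g' : Fin N → ℝ := fun i => if h : i ∈ σ then g ⟨i, h⟩ else 0 with hg'def
      have hg'supp : ∀ i ∉ σ, g' i = 0 := by intro i hi; simp [hg'def, hi]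
      have hg'sum : ∑ i, g' i • Φ i = 0 := by
        rw [← Finset.sum_subset (Finset.subset_univ σ)
          (fun i _ hi => by rw [hg'supp i hi, zero_smul]),
          ← Finset.sum_attach σ (fun i => g' i • Φ i), ← hgsum]
        exact Finset.sum_congr rfl (fun i _ => by simp [hg'def, i.2])
      obtain ⟨r, hrsupp, hrsum, i₁, hi₁σ, hi₁pos⟩ :
          ∃ r : Fin N → ℝ, (∀ i ∉ σ, r i = 0) ∧ (∑ i, r i • Φ i = 0) ∧
            ∃ i ∈ σ, 0 < r i := by
        by_cases hpos : ∃ i ∈ σ, 0 < g' i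
        · exact ⟨g', hg'supp, hg'sum, hpos⟩
        · push_neg at hpos
          refine ⟨-g', fun i hi => by simp [hg'supp i hi], by
            simpa [neg_smul] using congrArg Neg.neg hg'sum, j₀, j₀.2, ?_⟩
          have h1 : g' (j₀ : Fin N) = g j₀ := by simp [hg'def, j₀.2]
          have h2 := hpos (j₀ : Fin N) j₀.2
          have h3 : g' (j₀ : Fin N) ≠ 0 := by rw [h1]; exact hgj₀
          simp only [Pi.neg_apply]
          rcases lt_or_eq_of_le h2 with h | h
          · linarith
          · exact absurd h h3
      have hrσ : ∀ i, r i ≠ 0 → i ∈ σ := fun i h => by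
        by_contra hc; exact h (hrsupp i hc)
      set A : Finset (Fin N) := σ.filter (fun i => 0 < r i) with hAdef
      have hA : A.Nonempty := ⟨i₁, by simp [hAdef, hi₁σ, hi₁pos]⟩
      obtain ⟨i₀, hi₀A, hi₀min⟩ := Finset.exists_min_image A (fun i => t i / r i) hA
      have hi₀σ : i₀ ∈ σ := (Finset.mem_filter.mp hi₀A).1
      have hri₀ : 0 < r i₀ := (Finset.mem_filter.mp hi₀A).2
      set lam := t i₀ / r i₀ with hlam
      have hlam0 : 0 ≤ lam := div_nonneg (ht0 i₀) hri₀.le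
      set t'' : Fin N → ℝ := fun i => t i - lam * r i with ht''def
      have ht''0 : ∀ i, 0 ≤ t'' i := by
        intro i
        simp only [ht''def]
        rcases lt_or_ge 0 (r i) with hi | hi
        · have hiA : i ∈ A := by
            simp only [hAdef, Finset.mem_filter]
            exact ⟨hrσ i hi.ne', hi⟩
          have := hi₀min i hiA
          have : lam * r i ≤ t i := by
            rw [hlam]
            calc t i₀ / r i₀ * r i ≤ t i / r i * r i := by
                  apply mul_le_mul_of_nonneg_right (hi₀min i hiA) hi.le
              _ = t i := by field_simp
          linarith
        · nlinarith [ht0 i, mul_nonneg hlam0 (neg_nonneg.mpr hi)]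
      have ht''supp : ∀ i ∉ σ.erase i₀, t'' i = 0 := by
        intro i hi
        rcases Finset.mem_erase.not.mp hi with hi'
        push_neg at hi'
        by_cases hii : i = i₀
        · subst hii
          simp only [ht''def, hlam]
          field_simp
          ring
        · have hiσ : i ∉ σ := hi' hii
          simp [ht''def, htσ i hiσ, hrsupp i hiσ]
      have hsum'' : ∑ i, t'' i • Φ i = ∑ i, t i • Φ i := by
        simp only [ht''def, sub_smul, Finset.sum_sub_distrib]
        have : ∑ i, (lam * r i) • Φ i = lam • ∑ i, r i • Φ i := by
          rw [Finset.smul_sum]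
          exact Finset.sum_congr rfl (fun i _ => by rw [smul_smul])
        rw [this, hrsum, smul_zero, sub_zero]
      have hss : σ.erase i₀ ⊂ ν := by
        refine (Finset.ssubset_iff_of_subset ((Finset.erase_subset _ _).trans hσν)).mpr ?_
        exact ⟨i₀, hσν hi₀σ, Finset.notMem_erase _ _⟩
      obtain ⟨s, hsν, hli, t3, h1, h2, h3, h4⟩ := ih _ hss t'' ht''0 ht''supp
      exact ⟨s, hsν.trans ((Finset.erase_subset _ _).trans hσν), hli, t3, h1, h2, h3,
        h4.trans hsum''⟩


section Help
variable {N n : ℕ} (Φ : Fin N → Fin n → ℝ)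

lemma sum_dot {ι : Type*} (s : Finset ι) (f : ι → Fin n → ℝ) (u : Fin n → ℝ) :
    (∑ i ∈ s, f i) ⬝ᵥ u = ∑ i ∈ s, f i ⬝ᵥ u := by
  simp only [dotProduct, Finset.sum_apply, Finset.sum_mul]
  exact Finset.sum_comm

lemma cont_dot (u : Fin n → ℝ) : Continuous fun w : Fin n → ℝ => w ⬝ᵥ u := by
  unfold dotProduct
  exact continuous_finset_sum _ (fun j _ => (continuous_apply j).mul continuous_const)

lemma mem_creg_iff (w : Fin n → ℝ) :
    w ∈ creg Φ ↔ ∀ ν : Finset (Fin N), ν.card < n → w ∉ coneOn Φ ν := by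
  simp [creg]

lemma coneOn_convex (ν : Finset (Fin N)) : Convex ℝ (coneOn Φ ν) := by
  rintro μ₁ ⟨t₁, ht₁0, ht₁s, rfl⟩ μ₂ ⟨t₂, ht₂0, ht₂s, rfl⟩ p q hp hq hpq
  refine ⟨fun i => p * t₁ i + q * t₂ i,
    fun i => add_nonneg (mul_nonneg hp (ht₁0 i)) (mul_nonneg hq (ht₂0 i)),
    fun i hi => by simp [ht₁s i hi, ht₂s i hi], ?_⟩
  rw [Finset.smul_sum, Finset.smul_sum, ← Finset.sum_add_distrib]
  exact Finset.sum_congr rfl (fun i _ => by rw [add_smul, mul_smul, mul_smul])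

lemma smul_mem_coneOn (ν : Finset (Fin N)) {μ : Fin n → ℝ} (hμ : μ ∈ coneOn Φ ν)
    {c : ℝ} (hc : 0 ≤ c) : c • μ ∈ coneOn Φ ν := by
  obtain ⟨t, ht0, hts, rfl⟩ := hμ
  refine ⟨fun i => c * t i, fun i => mul_nonneg hc (ht0 i),
    fun i hi => by simp [hts i hi], ?_⟩
  rw [Finset.smul_sum]
  exact Finset.sum_congr rfl (fun i _ => by rw [mul_smul])

lemma zero_mem_coneOn (ν : Finset (Fin N)) : (0 : Fin n → ℝ) ∈ coneOn Φ ν :=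
  ⟨0, fun _ => le_refl _, fun _ _ => rfl, by simp⟩

lemma gen_mem_coneOn {ν : Finset (Fin N)} {i : Fin N} (hi : i ∈ ν) :
    Φ i ∈ coneOn Φ ν := by
  classical
  refine ⟨fun j => if j = i then 1 else 0, fun j => by by_cases h : j = i <;> simp [h],
    fun j hj => if_neg (fun h : j = i => hj (h ▸ hi)), ?_⟩
  simp [ite_smul]

lemma isClosed_coneOn_of_li (s : Finset (Fin N))
    (h : LinearIndependent ℝ (fun i : s => Φ i)) : IsClosed (coneOn Φ s) := by
  classical
  set L : (↥s → ℝ) →ₗ[ℝ] (Fin n → ℝ) :=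
    { toFun := fun t => ∑ i : s, t i • Φ i
      map_add' := fun t₁ t₂ => by
        simp only [Pi.add_apply, add_smul, Finset.sum_add_distrib]
      map_smul' := fun r t => by
        simp only [Pi.smul_apply, smul_eq_mul, RingHom.id_apply, Finset.smul_sum, mul_smul] }
    with hLdef
  have hker : LinearMap.ker L = ⊥ := by
    rw [LinearMap.ker_eq_bot']
    intro g hg
    have := Fintype.linearIndependent_iff.mp h g hg
    funext i
    exact this i
  have himg : coneOn Φ s = L '' {t | ∀ i, 0 ≤ t i} := by
    ext μ
    constructor
    · rintro ⟨t, ht0, hts, rfl⟩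
      refine ⟨fun i => t i, fun i => ht0 i, ?_⟩
      simp only [hLdef, LinearMap.coe_mk, AddHom.coe_mk]
      rw [Finset.sum_coe_sort s (fun i => t i • Φ i)]
      exact Finset.sum_subset (f := fun i => t i • Φ i) (Finset.subset_univ s)
        (fun i _ hi => by show t i • Φ i = 0; rw [hts i hi, zero_smul])
    · rintro ⟨q, hq0, rfl⟩
      refine ⟨fun i => if h : i ∈ s then q ⟨i, h⟩ else 0,
        fun i => by
          by_cases h : i ∈ s
          · simpa [h] using hq0 ⟨i, h⟩
          · simp [h],
        fun i hi => by simp [hi], ?_⟩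
      simp only [hLdef, LinearMap.coe_mk, AddHom.coe_mk]
      rw [← Finset.sum_subset (Finset.subset_univ s)
        (fun i _ hi => by simp [hi]),
        ← Finset.sum_coe_sort s (fun i => (if h : i ∈ s then q ⟨i, h⟩ else 0) • Φ i)]
      exact (Finset.sum_congr rfl (fun i _ => by simp [i.2])).symm
  rw [himg]
  have hcl : IsClosed {t : ↥s → ℝ | ∀ i, 0 ≤ t i} := by
    have : {t : ↥s → ℝ | ∀ i, 0 ≤ t i} =
        ⋂ i, {t | 0 ≤ t i} := by ext t; simp
    rw [this]
    exact isClosed_iInter (fun i => isClosed_le continuous_const (continuous_apply i))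
  exact (LinearMap.isClosedEmbedding_of_injective hker).isClosedMap _ hcl

lemma isClosed_coneOn (ν : Finset (Fin N)) : IsClosed (coneOn Φ ν) := by
  classical
  have : coneOn Φ ν = ⋃ (s : Finset (Fin N)) (_ : s ⊆ ν ∧
      LinearIndependent ℝ (fun i : s => Φ i)), coneOn Φ s := by
    ext μ
    simp only [Set.mem_iUnion]
    constructor
    · rintro ⟨t, ht0, hts, rfl⟩
      obtain ⟨s, hsν, hli, t', h1, h2, _, h4⟩ := cara Φ ν t ht0 hts
      exact ⟨s, ⟨hsν, hli⟩, t', h1, h2, h4.symm⟩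
    · rintro ⟨s, ⟨hsν, _⟩, t, ht0, hts, rfl⟩
      exact ⟨t, ht0, fun i hi => hts i (fun h => hi (hsν h)), rfl⟩
  rw [this]
  exact isClosed_iUnion_of_finite (fun s => isClosed_iUnion_of_finite
    (fun hs => isClosed_coneOn_of_li Φ s hs.2))

lemma isOpen_creg : IsOpen (creg Φ) := by
  rw [creg]
  rw [isOpen_compl_iff]
  have : (⋃ ν ∈ {ν : Finset (Fin N) | ν.card < n}, coneOn Φ ν) =
      ⋃ (ν : Finset (Fin N)) (_ : ν.card < n), coneOn Φ ν := by
    simp [Set.mem_setOf_eq]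
  rw [this]
  exact isClosed_iUnion_of_finite (fun ν => isClosed_iUnion_of_finite
    (fun _ => isClosed_coneOn Φ ν))

lemma cone_sep (ν : Finset (Fin N)) (w : Fin n → ℝ) (hw : w ∉ coneOn Φ ν) :
    ∃ d : Fin n → ℝ, (∀ i ∈ ν, Φ i ⬝ᵥ d ≤ 0) ∧ 0 < w ⬝ᵥ d := by
  classical
  obtain ⟨f, u, hfu, huw⟩ := geometric_hahn_banach_closed_point
    (coneOn_convex Φ ν) (isClosed_coneOn Φ ν) hw
  set d : Fin n → ℝ := fun j => f (fun k => if j = k then 1 else 0) with hddef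
  have hfd : ∀ y : Fin n → ℝ, f y = y ⬝ᵥ d := by
    intro y
    conv_lhs => rw [pi_eq_sum_univ y]
    rw [map_sum]
    simp only [map_smul, smul_eq_mul]
    rfl
  have hu0 : 0 < u := by
    have := hfu 0 (zero_mem_coneOn Φ ν)
    simpa using this
  refine ⟨d, ?_, ?_⟩
  · intro i hi
    by_contra hlt
    push_neg at hlt
    have hmem : (u / (Φ i ⬝ᵥ d) + 1) • Φ i ∈ coneOn Φ ν :=
      smul_mem_coneOn Φ ν (gen_mem_coneOn Φ hi)
        (by positivity)
    have h2 := hfu _ hmem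
    rw [map_smul, smul_eq_mul, hfd] at h2
    have h3 : u / (Φ i ⬝ᵥ d) * (Φ i ⬝ᵥ d) = u := by field_simp
    nlinarith [h2, h3]
  · rw [← hfd]; linarith
end Help


section L1
variable {N n : ℕ}

lemma cont_dot2 (v : Fin n → ℝ) : Continuous fun u : Fin n → ℝ => v ⬝ᵥ u := by
  unfold dotProduct
  exact continuous_finset_sum _ (fun j _ => continuous_const.mul (continuous_apply j))

lemma sum_smul_dot {ι : Type*} [Fintype ι] (r : ι → ℝ) (f : ι → Fin n → ℝ) (u : Fin n → ℝ) :
    (∑ i, r i • f i) ⬝ᵥ u = ∑ i, r i * (f i ⬝ᵥ u) := by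
  rw [sum_dot]
  exact Finset.sum_congr rfl (fun i _ => by rw [smul_dotProduct, smul_eq_mul])

lemma sum_support_coe (s : Finset (Fin N)) (t : Fin N → ℝ)
    (h : ∀ i ∉ s, t i = 0) (f : Fin N → Fin n → ℝ) :
    ∑ i, t i • f i = ∑ i : ↥s, t ↑i • f ↑i := by
  rw [Finset.sum_coe_sort s (fun i => t i • f i)]
  exact (Finset.sum_subset (f := fun i => t i • f i) (Finset.subset_univ s)
    (fun i _ hi => by show t i • f i = 0; rw [h i hi, zero_smul])).symm

lemma basis_extract (Φ : Fin N → Fin n → ℝ) (w : Fin n → ℝ) (hwreg : w ∈ creg Φ)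
    {ν : Finset (Fin N)} (hw : w ∈ coneOn Φ ν) :
    ∃ s : Finset (Fin N), s ⊆ ν ∧ LinearIndependent ℝ (fun i : s => Φ i) ∧ s.card = n ∧
      ∃ t : Fin N → ℝ, (∀ i ∈ s, 0 < t i) ∧ (∀ i ∉ s, t i = 0) ∧ w = ∑ i, t i • Φ i := by
  obtain ⟨t, ht0, hts, rfl⟩ := hw
  obtain ⟨s, hsν, hli, t', h1, h2, h3, h4⟩ := cara Φ ν t ht0 hts
  have hcard_le : s.card ≤ n := by
    have := hli.fintype_card_le_finrank
    simpa [Module.finrank_pi, Fintype.card_coe] using this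
  have hcard_ge : ¬ s.card < n := fun hlt =>
    ((mem_creg_iff Φ _).mp hwreg) s hlt ⟨t', h1, h2, h4.symm⟩
  exact ⟨s, hsν, hli, by omega, t', h3, h2, h4.symm⟩

set_option maxHeartbeats 1000000 in
lemma local_max (Φ : Fin N → Fin n → ℝ)
    (w : Fin n → ℝ) (hwreg : w ∈ creg Φ) (hw : w ∈ coneOn Φ Finset.univ)
    (cc : Fin N → ℝ) (hcc : ∀ i, 0 ≤ cc i) :
    ∃ u₁, (∀ i, Φ i ⬝ᵥ u₁ ≤ cc i) ∧ ∃ U, IsOpen U ∧ w ∈ U ∧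
      ∀ w' ∈ U, ∀ u, (∀ i, Φ i ⬝ᵥ u ≤ cc i) → w' ⬝ᵥ u ≤ w' ⬝ᵥ u₁ := by
  classical
  rcases Nat.eq_zero_or_pos n with hn | hn
  · subst hn
    refine ⟨0, fun i => by simpa using hcc i, Set.univ, isOpen_univ, Set.mem_univ _,
      fun w' _ u _ => ?_⟩
    simp [dotProduct]
  have hfinrank : Module.finrank ℝ (Fin n → ℝ) = n := by
    simp [Module.finrank_pi]
  -- Step A: extract a basis from a representation of w
  obtain ⟨σ₀, -, hli₀, hcard₀, t₀, ht₀pos, ht₀supp, hw₀⟩ :=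
    basis_extract Φ w hwreg hw
  have hσ₀ne : Nonempty ↥σ₀ := by
    have : σ₀.Nonempty := Finset.card_pos.mp (by omega)
    exact ⟨⟨this.choose, this.choose_spec⟩⟩
  have hb₀card : Fintype.card ↥σ₀ = Module.finrank ℝ (Fin n → ℝ) := by
    simp [Fintype.card_coe, hcard₀, hfinrank]
  set b₀ : Module.Basis ↥σ₀ ℝ (Fin n → ℝ) := basisOfLinearIndependentOfCardEqFinrank hli₀ hb₀card
    with hb₀def
  have hb₀ : ∀ i : ↥σ₀, b₀ i = Φ ↑i := fun i => by
    rw [hb₀def]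
    exact congrFun (coe_basisOfLinearIndependentOfCardEqFinrank hli₀ hb₀card) i
  -- Step C: attainment of the max of ⟨w, ·⟩ over D
  set D : Set (Fin n → ℝ) := {u | ∀ i, Φ i ⬝ᵥ u ≤ cc i} with hDdef
  set K : Set (Fin n → ℝ) := {u ∈ D | 0 ≤ w ⬝ᵥ u} with hKdef
  have hKclosed : IsClosed K := by
    have : K = (⋂ i, {u | Φ i ⬝ᵥ u ≤ cc i}) ∩ {u | 0 ≤ w ⬝ᵥ u} := by
      ext u; simp [hKdef, hDdef, Set.mem_iInter]
    rw [this]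
    exact ((isClosed_iInter (fun i => isClosed_le (cont_dot2 (Φ i)) continuous_const)).inter
      (isClosed_le continuous_const (cont_dot2 w)))
  -- the linear equivalence u ↦ (⟨Φ i, u⟩)_{i ∈ σ₀}
  set F : (Fin n → ℝ) →ₗ[ℝ] (↥σ₀ → ℝ) :=
    { toFun := fun u => fun i => Φ ↑i ⬝ᵥ u
      map_add' := fun u v => by funext i; simp [dotProduct_add]
      map_smul' := fun r u => by funext i; simp [dotProduct_smul] } with hFdef
  have hFinj : Function.Injective F := by
    rw [← LinearMap.ker_eq_bot, LinearMap.ker_eq_bot']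
    intro u hu
    have h0 : ∀ i : ↥σ₀, Φ ↑i ⬝ᵥ u = 0 := fun i => congrFun hu i
    have hrep : u = ∑ i : ↥σ₀, b₀.repr u i • Φ ↑i := by
      conv_lhs => rw [← b₀.sum_repr u]
      exact Finset.sum_congr rfl (fun i _ => by rw [hb₀])
    have : u ⬝ᵥ u = 0 := by
      nth_rewrite 1 [hrep]
      rw [sum_smul_dot]
      exact Finset.sum_eq_zero (fun i _ => by rw [h0 i, mul_zero])
    exact dotProduct_self_eq_zero.mp this
  have hFsurj : Function.Surjective F :=
    (LinearMap.injective_iff_surjective_of_finrank_eq_finrank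
      (by simp [hfinrank, Fintype.card_coe, hcard₀, Module.finrank_pi])).mp hFinj
  set e : (Fin n → ℝ) ≃ₗ[ℝ] (↥σ₀ → ℝ) := LinearEquiv.ofBijective F ⟨hFinj, hFsurj⟩ with hedef
  set Ψ : (Fin n → ℝ) ≃L[ℝ] (↥σ₀ → ℝ) := e.toContinuousLinearEquiv with hΨdef
  set S : ℝ := ∑ j : ↥σ₀, t₀ ↑j * cc ↑j with hSdef
  have hwdot : ∀ u, w ⬝ᵥ u = ∑ j : ↥σ₀, t₀ ↑j * (Φ ↑j ⬝ᵥ u) := by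
    intro u
    rw [hw₀, sum_support_coe σ₀ t₀ ht₀supp, sum_smul_dot]
  have hKsub : K ⊆ Ψ.symm '' Set.Icc (fun i => (-S) / t₀ ↑i) (fun i => cc ↑i) := by
    intro u hu
    refine ⟨Ψ u, Set.mem_Icc.mpr ⟨?_, ?_⟩, Ψ.symm_apply_apply u⟩
    · intro i
      show (-S) / t₀ ↑i ≤ Φ ↑i ⬝ᵥ u
      rw [div_le_iff₀ (ht₀pos ↑i i.2)]
      have hsplit : ∑ j ∈ Finset.univ.erase i, t₀ ↑j * (Φ ↑j ⬝ᵥ u) + t₀ ↑i * (Φ ↑i ⬝ᵥ u)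
          = ∑ j : ↥σ₀, t₀ ↑j * (Φ ↑j ⬝ᵥ u) :=
        Finset.sum_erase_add Finset.univ _ (Finset.mem_univ i)
      have h1 : ∑ j ∈ Finset.univ.erase i, t₀ ↑j * (Φ ↑j ⬝ᵥ u) ≤ S := by
        calc ∑ j ∈ Finset.univ.erase i, t₀ ↑j * (Φ ↑j ⬝ᵥ u)
            ≤ ∑ j ∈ Finset.univ.erase i, t₀ ↑j * cc ↑j := by
              refine Finset.sum_le_sum (fun j _ => ?_)
              exact mul_le_mul_of_nonneg_left (hu.1 ↑j) (ht₀pos ↑j j.2).le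
          _ ≤ S := by
              rw [hSdef]
              refine Finset.sum_le_sum_of_subset_of_nonneg (Finset.subset_univ _) ?_
              intro j _ _
              exact mul_nonneg (ht₀pos ↑j j.2).le (hcc ↑j)
      have h2 : 0 ≤ w ⬝ᵥ u := hu.2
      rw [hwdot u] at h2
      nlinarith [hsplit, h1, h2]
    · intro i
      show Φ ↑i ⬝ᵥ u ≤ cc ↑i
      exact hu.1 ↑i
  have hKcpt : IsCompact K :=
    IsCompact.of_isClosed_subset ((isCompact_Icc).image Ψ.symm.continuous) hKclosed hKsub
  have hKne : K.Nonempty := ⟨0, fun i => by simpa using hcc i, by simp⟩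
  obtain ⟨u₁, hu₁K, hu₁max⟩ := hKcpt.exists_isMaxOn hKne (cont_dot2 w).continuousOn
  have hu₁D : ∀ i, Φ i ⬝ᵥ u₁ ≤ cc i := hu₁K.1
  have hDmax : ∀ u, (∀ i, Φ i ⬝ᵥ u ≤ cc i) → w ⬝ᵥ u ≤ w ⬝ᵥ u₁ := by
    intro u hu
    rcases le_or_gt 0 (w ⬝ᵥ u) with h | h
    · exact hu₁max ⟨hu, h⟩
    · exact h.le.trans hu₁K.2
  -- Step D: KKT -- w lies in the cone on the tight constraints
  set I : Finset (Fin N) := Finset.univ.filter (fun i => Φ i ⬝ᵥ u₁ = cc i) with hIdef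
  have hwI : w ∈ coneOn Φ I := by
    by_contra hns
    obtain ⟨d, hd1, hd2⟩ := cone_sep Φ I w hns
    set J : Finset (Fin N) :=
      Finset.univ.filter (fun i => 0 < Φ i ⬝ᵥ d ∧ Φ i ⬝ᵥ u₁ ≠ cc i) with hJdef
    set εs : Finset ℝ :=
      insert (1:ℝ) (J.image (fun i => (cc i - Φ i ⬝ᵥ u₁) / (Φ i ⬝ᵥ d))) with hεsdef
    have hεne : εs.Nonempty := ⟨1, Finset.mem_insert_self _ _⟩
    set ε : ℝ := εs.min' hεne with hεdef
    have hεpos : 0 < ε := by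
      rw [hεdef, Finset.lt_min'_iff]
      intro y hy
      rcases Finset.mem_insert.mp hy with h | h
      · rw [h]; norm_num
      · obtain ⟨i, hiJ, rfl⟩ := Finset.mem_image.mp h
        obtain ⟨hdpos, hne⟩ := (Finset.mem_filter.mp hiJ).2
        exact div_pos (by have := hu₁D i; cases lt_or_eq_of_le this with
          | inl h => linarith
          | inr h => exact absurd h hne) hdpos
    have hεle : ∀ i ∈ J, ε * (Φ i ⬝ᵥ d) ≤ cc i - Φ i ⬝ᵥ u₁ := by
      intro i hi
      have h1 : ε ≤ (cc i - Φ i ⬝ᵥ u₁) / (Φ i ⬝ᵥ d) :=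
        Finset.min'_le _ _ (Finset.mem_insert_of_mem (Finset.mem_image_of_mem _ hi))
      have hdpos := (Finset.mem_filter.mp hi).2.1
      calc ε * (Φ i ⬝ᵥ d) ≤ (cc i - Φ i ⬝ᵥ u₁) / (Φ i ⬝ᵥ d) * (Φ i ⬝ᵥ d) :=
            mul_le_mul_of_nonneg_right h1 hdpos.le
        _ = cc i - Φ i ⬝ᵥ u₁ := by field_simp
    have hu₂D : ∀ i, Φ i ⬝ᵥ (u₁ + ε • d) ≤ cc i := by
      intro i
      rw [dotProduct_add, dotProduct_smul, smul_eq_mul]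
      by_cases hiI : i ∈ I
      · have h1 : Φ i ⬝ᵥ u₁ = cc i := (Finset.mem_filter.mp hiI).2
        have h2 : Φ i ⬝ᵥ d ≤ 0 := hd1 i hiI
        nlinarith
      · have hne : Φ i ⬝ᵥ u₁ ≠ cc i := by
          intro h
          exact hiI (Finset.mem_filter.mpr ⟨Finset.mem_univ i, h⟩)
        rcases le_or_gt (Φ i ⬝ᵥ d) 0 with hd0 | hd0
        · have hlt := lt_of_le_of_ne (hu₁D i) hne
          nlinarith
        · have hiJ : i ∈ J := Finset.mem_filter.mpr ⟨Finset.mem_univ i, hd0, hne⟩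
          have := hεle i hiJ
          linarith
    have hle := hDmax _ hu₂D
    rw [dotProduct_add, dotProduct_smul, smul_eq_mul] at hle
    have := mul_pos hεpos hd2
    linarith
  -- Step E: extract basis within tight constraints, build the open neighborhood
  obtain ⟨σ, hσI, hliσ, hcardσ, t₃, ht₃pos, ht₃supp, hw₃⟩ := basis_extract Φ w hwreg hwI
  have hσne : Nonempty ↥σ := by
    have : σ.Nonempty := Finset.card_pos.mp (by omega)
    exact ⟨⟨this.choose, this.choose_spec⟩⟩
  have hbcard : Fintype.card ↥σ = Module.finrank ℝ (Fin n → ℝ) := by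
    simp [Fintype.card_coe, hcardσ, hfinrank]
  set b : Module.Basis ↥σ ℝ (Fin n → ℝ) := basisOfLinearIndependentOfCardEqFinrank hliσ hbcard
    with hbdef
  have hb : ∀ i : ↥σ, b i = Φ ↑i := fun i => by
    rw [hbdef]
    exact congrFun (coe_basisOfLinearIndependentOfCardEqFinrank hliσ hbcard) i
  set U : Set (Fin n → ℝ) := ⋂ i : ↥σ, {w' | 0 < b.coord i w'} with hUdef
  have hUopen : IsOpen U :=
    isOpen_iInter_of_finite (fun i => isOpen_lt continuous_const
      (b.coord i).continuous_of_finiteDimensional)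
  have hwU : w ∈ U := by
    have hw4 : w = ∑ i : ↥σ, t₃ ↑i • b i := by
      rw [hw₃, sum_support_coe σ t₃ ht₃supp]
      exact Finset.sum_congr rfl (fun i _ => by rw [hb])
    rw [hUdef, Set.mem_iInter]
    intro i
    have hreprw : ⇑(b.repr w) = fun i : ↥σ => t₃ ↑i := by
      rw [hw4]; exact b.repr_sum_self _
    show 0 < b.coord i w
    rw [Module.Basis.coord_apply, hreprw]
    exact ht₃pos ↑i i.2
  refine ⟨u₁, hu₁D, U, hUopen, hwU, ?_⟩
  intro w' hw' u hu
  have hrepr : ∀ i : ↥σ, 0 ≤ b.repr w' i := by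
    intro i
    have := Set.mem_iInter.mp hw' i
    rw [Set.mem_setOf_eq, Module.Basis.coord_apply] at this
    exact this.le
  have hw'eq : w' = ∑ i : ↥σ, b.repr w' i • Φ ↑i := by
    conv_lhs => rw [← b.sum_repr w']
    exact Finset.sum_congr rfl (fun i _ => by rw [hb])
  calc w' ⬝ᵥ u = ∑ i : ↥σ, b.repr w' i * (Φ ↑i ⬝ᵥ u) := by
        conv_lhs => rw [hw'eq]
        rw [sum_smul_dot]
    _ ≤ ∑ i : ↥σ, b.repr w' i * (Φ ↑i ⬝ᵥ u₁) := by
        refine Finset.sum_le_sum (fun i _ => ?_)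
        have htight : Φ ↑i ⬝ᵥ u₁ = cc ↑i := (Finset.mem_filter.mp (hσI i.2)).2
        rw [htight]
        exact mul_le_mul_of_nonneg_left (hu ↑i) (hrepr i)
    _ = w' ⬝ᵥ u₁ := by
        conv_rhs => rw [hw'eq]
        rw [sum_smul_dot]
end L1


section L2
variable {N n : ℕ}

lemma global_max (Φ : Fin N → Fin n → ℝ) (x : Fin n → ℝ) (hx : x ∈ creg Φ)
    (hcC : connectedComponentIn (creg Φ) x ⊆ coneOn Φ Finset.univ)
    (cc : Fin N → ℝ) (hcc : ∀ i, 0 ≤ cc i) :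
    ∃ u₀, (∀ i, Φ i ⬝ᵥ u₀ ≤ cc i) ∧
      ∀ w ∈ closure (connectedComponentIn (creg Φ) x), ∀ u,
        (∀ i, Φ i ⬝ᵥ u ≤ cc i) → w ⬝ᵥ u ≤ w ⬝ᵥ u₀ := by
  classical
  set c := connectedComponentIn (creg Φ) x with hcdef
  have hxc : x ∈ c := mem_connectedComponentIn hx
  have hcreg : c ⊆ creg Φ := connectedComponentIn_subset _ _
  obtain ⟨u₀, hu₀D, U₀, hU₀o, hxU₀, hU₀max⟩ := local_max Φ x hx (hcC hxc) cc hcc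
  set M : Set (Fin n → ℝ) := {w | ∀ u, (∀ i, Φ i ⬝ᵥ u ≤ cc i) → w ⬝ᵥ u ≤ w ⬝ᵥ u₀} with hMdef
  have hMclosed : IsClosed M := by
    have : M = ⋂ (u : Fin n → ℝ), ⋂ (_ : ∀ i, Φ i ⬝ᵥ u ≤ cc i), {w | w ⬝ᵥ u ≤ w ⬝ᵥ u₀} := by
      ext w; simp [hMdef, Set.mem_iInter]
    rw [this]
    exact isClosed_iInter fun u => isClosed_iInter fun _ =>
      isClosed_le (cont_dot u) (cont_dot u₀)
  have hkey : ∀ w ∈ c ∩ M, w ∈ interior M := by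
    rintro w ⟨hwc, hwM⟩
    obtain ⟨u₁, hu₁D, U, hUo, hwU, hUmax⟩ := local_max Φ w (hcreg hwc) (hcC hwc) cc hcc
    obtain ⟨r, hr, hball⟩ := Metric.isOpen_iff.mp hUo w hwU
    rw [mem_interior]
    refine ⟨Metric.ball w r, ?_, Metric.isOpen_ball, Metric.mem_ball_self hr⟩
    intro w' hw'
    have hw'U : w' ∈ U := hball hw'
    have hrefl : w + (w - w') ∈ U := by
      apply hball
      rw [Metric.mem_ball, dist_eq_norm]
      have heq : w + (w - w') - w = -(w' - w) := by abel
      rw [heq, norm_neg, ← dist_eq_norm]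
      exact hw'
    have h1 : w ⬝ᵥ u₁ = w ⬝ᵥ u₀ :=
      le_antisymm (hwM u₁ hu₁D) (hUmax w hwU u₀ hu₀D)
    have h2 : w' ⬝ᵥ u₀ ≤ w' ⬝ᵥ u₁ := hUmax w' hw'U u₀ hu₀D
    have h3 : (w + (w - w')) ⬝ᵥ u₀ ≤ (w + (w - w')) ⬝ᵥ u₁ := hUmax _ hrefl u₀ hu₀D
    rw [add_dotProduct, sub_dotProduct, add_dotProduct,
      sub_dotProduct] at h3
    intro u huD
    have h4 : w' ⬝ᵥ u ≤ w' ⬝ᵥ u₁ := hUmax w' hw'U u huD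
    linarith
  have hcM : c ⊆ M := by
    by_contra hnc
    rw [Set.not_subset] at hnc
    obtain ⟨w₀, hw₀c, hw₀M⟩ := hnc
    have hpc : IsPreconnected c := isPreconnected_connectedComponentIn
    have hxM : x ∈ M := fun u hu => hU₀max x hxU₀ u hu
    have hcover : c ⊆ interior M ∪ Mᶜ := by
      intro w hw
      by_cases hwM : w ∈ M
      · exact Or.inl (hkey w ⟨hw, hwM⟩)
      · exact Or.inr hwM
    have h1 : (c ∩ interior M).Nonempty := ⟨x, hxc, hkey x ⟨hxc, hxM⟩⟩
    have h2 : (c ∩ Mᶜ).Nonempty := ⟨w₀, hw₀c, hw₀M⟩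
    obtain ⟨y, hy⟩ := hpc (interior M) Mᶜ isOpen_interior hMclosed.isOpen_compl hcover h1 h2
    exact hy.2.2 (interior_subset hy.2.1)
  exact ⟨u₀, hu₀D, fun w hw u hu => (closure_minimal hcM hMclosed) hw u hu⟩

lemma zonotope_mem (Φ : Fin N → Fin n → ℝ) (z : Fin N → ℝ) (hz0 : ∀ i, 0 ≤ z i)
    (a : Fin n → ℝ)
    (h : ∀ v, a ⬝ᵥ v ≤ ∑ i, z i * max (Φ i ⬝ᵥ v) 0) :
    ∃ q : Fin N → ℝ, (∀ i, 0 ≤ q i ∧ q i ≤ z i) ∧ ∑ i, q i • Φ i = a := by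
  classical
  set L : (Fin N → ℝ) →ₗ[ℝ] (Fin n → ℝ) :=
    { toFun := fun q => ∑ i, q i • Φ i
      map_add' := fun q₁ q₂ => by
        simp only [Pi.add_apply, add_smul, Finset.sum_add_distrib]
      map_smul' := fun r q => by
        simp only [Pi.smul_apply, smul_eq_mul, RingHom.id_apply, Finset.smul_sum, mul_smul] }
    with hLdef
  set Z : Set (Fin n → ℝ) := L '' Set.Icc 0 z with hZdef
  by_cases haZ : a ∈ Z
  · obtain ⟨q, hq, rfl⟩ := haZ
    rw [Set.mem_Icc] at hq
    exact ⟨q, fun i => ⟨hq.1 i, hq.2 i⟩, rfl⟩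
  · exfalso
    have hZconv : Convex ℝ Z := (convex_Icc 0 z).linear_image L
    have hZcpt : IsCompact Z := (isCompact_Icc).image L.continuous_of_finiteDimensional
    obtain ⟨f, u, hfu, hua⟩ := geometric_hahn_banach_closed_point hZconv hZcpt.isClosed haZ
    set v : Fin n → ℝ := fun j => f (fun k => if j = k then 1 else 0) with hvdef
    have hfd : ∀ y : Fin n → ℝ, f y = y ⬝ᵥ v := by
      intro y
      conv_lhs => rw [pi_eq_sum_univ y]
      rw [map_sum]
      simp only [map_smul, smul_eq_mul]
      rfl
    set q : Fin N → ℝ := fun i => if 0 < Φ i ⬝ᵥ v then z i else 0 with hqdef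
    have hqZ : L q ∈ Z := by
      refine ⟨q, Set.mem_Icc.mpr ⟨?_, ?_⟩, rfl⟩
      · intro i
        show (0:ℝ) ≤ q i
        rw [hqdef]
        dsimp only
        split <;> [exact hz0 i; exact le_refl 0]
      · intro i
        show q i ≤ z i
        rw [hqdef]
        dsimp only
        split <;> [exact le_refl _; exact hz0 i]
    have hLq : f (L q) = ∑ i, z i * max (Φ i ⬝ᵥ v) 0 := by
      rw [hfd]
      show (∑ i, q i • Φ i) ⬝ᵥ v = _
      rw [sum_smul_dot]
      refine Finset.sum_congr rfl (fun i _ => ?_)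
      rw [hqdef]
      dsimp only
      rcases lt_or_ge 0 (Φ i ⬝ᵥ v) with hp | hp
      · rw [if_pos hp, max_eq_left hp.le]
      · rw [if_neg (not_lt.mpr hp), max_eq_right hp, zero_mul, mul_zero]
    have hlt := hfu _ hqZ
    rw [hLq] at hlt
    have h2 := h v
    rw [← hfd a] at h2
    linarith
end L2


theorem stmt16 (n N : ℕ) (Φ : Fin N → Fin n → ℝ)
    (hspan : Submodule.span ℝ (Set.range Φ) = ⊤)
    (hhalf : ∃ v : Fin n → ℝ, ∀ i, 0 < ∑ j, Φ i j * v j)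
    (c : Set (Fin n → ℝ)) (x : Fin n → ℝ) (hx : x ∈ creg Φ)
    (hc : c = connectedComponentIn (creg Φ) x)
    (hcC : c ⊆ coneOn Φ Finset.univ)
    (a b : Fin n → ℝ) (ha : a ∈ closure c) (hb : b ∈ closure c) :
    partitionPolytope Φ a + partitionPolytope Φ b = partitionPolytope Φ (a + b) := by
  subst hc
  apply Set.Subset.antisymm
  · intro p hp
    rw [Set.mem_add] at hp
    obtain ⟨p₁, hp₁, p₂, hp₂, rfl⟩ := hp
    refine ⟨fun i => add_nonneg (hp₁.1 i) (hp₂.1 i), ?_⟩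
    have : ∑ i, (p₁ + p₂) i • Φ i = (∑ i, p₁ i • Φ i) + (∑ i, p₂ i • Φ i) := by
      rw [← Finset.sum_add_distrib]
      exact Finset.sum_congr rfl (fun i _ => by rw [Pi.add_apply, add_smul])
    rw [this, hp₁.2, hp₂.2]
  · intro z hz
    obtain ⟨hz0, hzsum⟩ := hz
    have key : ∀ v, a ⬝ᵥ v ≤ ∑ i, z i * max (Φ i ⬝ᵥ v) 0 := by
      intro v
      obtain ⟨u₀, hu₀D, hmax⟩ := global_max Φ x hx hcC
        (fun i => max (Φ i ⬝ᵥ v) 0) (fun i => le_max_right _ _)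
      have hA : a ⬝ᵥ v ≤ a ⬝ᵥ u₀ := hmax a ha v (fun i => le_max_left _ _)
      have hB : (0:ℝ) ≤ b ⬝ᵥ u₀ := by
        have := hmax b hb 0 (fun i => by simp [le_max_right])
        simpa using this
      have hC : ∑ i, z i * (Φ i ⬝ᵥ u₀) = a ⬝ᵥ u₀ + b ⬝ᵥ u₀ := by
        rw [← sum_smul_dot, hzsum, add_dotProduct]
      have hD : ∑ i, z i * (Φ i ⬝ᵥ u₀) ≤ ∑ i, z i * max (Φ i ⬝ᵥ v) 0 :=
        Finset.sum_le_sum (fun i _ => mul_le_mul_of_nonneg_left (hu₀D i) (hz0 i))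
      linarith
    obtain ⟨q, hq, hqa⟩ := zonotope_mem Φ z hz0 a key
    rw [Set.mem_add]
    refine ⟨q, ⟨fun i => (hq i).1, hqa⟩, z - q, ⟨fun i => sub_nonneg.mpr (hq i).2, ?_⟩, ?_⟩
    · have : ∑ i, (z - q) i • Φ i = (∑ i, z i • Φ i) - (∑ i, q i • Φ i) := by
        rw [← Finset.sum_sub_distrib]
        exact Finset.sum_congr rfl (fun i _ => by rw [Pi.sub_apply, sub_smul])
      rw [this, hzsum, hqa, add_sub_cancel_left]
    · abel
end
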